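/- Pruning of irrelevant environment suffixes in composition: let A = {e1, nl1, ol2, e2} with e2 a simple environment. (1) If ol2 ≤ nl1 − lev(e1) then A reduces by the reading and merging rules to any simple environment that e1 reduces to. (2) For any positive i with i ≤ nl1 − lev(e1) and i ≤ ol2, A reduces to any simple environment that {e1, nl1 − i, ol2 − i, e2{i}} reduces to, where e2{i} removes the first i elements of e2. -/
import Mathlib


/- Terms of the suspension calculus: constants, de Bruijn indices `#i`,
applications, abstractions, and suspensions `[t, ol, nl, e]`. -/
mutual
inductive Tm : Type where
  | const : Nat → Tm
  | idx : Nat → Tm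
  | app : Tm → Tm → Tm
  | lam : Tm → Tm
  | susp : Tm → Nat → Nat → Env → Tm
/-- Environments: `nil`, cons cells `(t,n)::e`, and merges `{e1, nl1, ol2, e2}`. -/
inductive Env : Type where
  | nil : Env
  | econs : Tm → Nat → Env → Env
  | merge : Env → Nat → Nat → Env → Env
end

/-- Length of an environment. -/
def Env.len : Env → Nat
  | .nil => 0
  | .econs _ _ e => 1 + Env.len e
  | .merge e1 nl1 _ e2 => Env.len e1 + (Env.len e2 - nl1)

/-- Level of an environment. -/
def Env.lev : Env → Nat
  | .nil => 0
  | .econs _ l _ => l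
  | .merge _ nl1 ol2 e2 => Env.lev e2 + (nl1 - ol2)

/- Well-formedness of suspension expressions. -/
mutual
inductive WfTm : Tm → Prop where
  | const : ∀ c, WfTm (.const c)
  | idx : ∀ i, 1 ≤ i → WfTm (.idx i)
  | app : ∀ {t1 t2}, WfTm t1 → WfTm t2 → WfTm (.app t1 t2)
  | lam : ∀ {t}, WfTm t → WfTm (.lam t)
  | susp : ∀ {t e} (ol nl : Nat), WfTm t → WfEnv e → Env.len e = ol →
      Env.lev e ≤ nl → WfTm (.susp t ol nl e)
inductive WfEnv : Env → Prop where
  | nil : WfEnv .nil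
  | econs : ∀ {t e} (l : Nat), WfTm t → WfEnv e → Env.lev e ≤ l → WfEnv (.econs t l e)
  | merge : ∀ {e1 e2} (nl1 ol2 : Nat), WfEnv e1 → WfEnv e2 → Env.lev e1 ≤ nl1 →
      Env.len e2 = ol2 → WfEnv (.merge e1 nl1 ol2 e2)
end

/- One-step rewriting by the reading rules (r1)-(r6) and merging rules
(m1)-(m6), applied at any subexpression. -/
mutual
inductive SR : Tm → Tm → Prop where
  | r1 : ∀ c ol nl e, SR (.susp (.const c) ol nl e) (.const c)
  | r2 : ∀ i nl, 1 ≤ i → SR (.susp (.idx i) 0 nl .nil) (.idx (i + nl))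
  | r3 : ∀ ol nl t l e, SR (.susp (.idx 1) ol nl (.econs t l e)) (.susp t 0 (nl - l) .nil)
  | r4 : ∀ i ol nl t l e, 1 < i →
      SR (.susp (.idx i) ol nl (.econs t l e)) (.susp (.idx (i - 1)) (ol - 1) nl e)
  | r5 : ∀ t1 t2 ol nl e,
      SR (.susp (.app t1 t2) ol nl e) (.app (.susp t1 ol nl e) (.susp t2 ol nl e))
  | r6 : ∀ t ol nl e,
      SR (.susp (.lam t) ol nl e)
         (.lam (.susp t (ol + 1) (nl + 1) (.econs (.idx 1) (nl + 1) e)))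
  | m1 : ∀ t ol1 nl1 e1 ol2 nl2 e2,
      SR (.susp (.susp t ol1 nl1 e1) ol2 nl2 e2)
         (.susp t (ol1 + (ol2 - nl1)) (nl2 + (nl1 - ol2)) (.merge e1 nl1 ol2 e2))
  | appL : ∀ {t1 t1'} (t2 : Tm), SR t1 t1' → SR (.app t1 t2) (.app t1' t2)
  | appR : ∀ (t1 : Tm) {t2 t2'}, SR t2 t2' → SR (.app t1 t2) (.app t1 t2')
  | lamC : ∀ {t t'}, SR t t' → SR (.lam t) (.lam t')
  | suspT : ∀ {t t'} ol nl e, SR t t' → SR (.susp t ol nl e) (.susp t' ol nl e)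
  | suspE : ∀ t ol nl {e e'}, SRE e e' → SR (.susp t ol nl e) (.susp t ol nl e')
inductive SRE : Env → Env → Prop where
  | m2 : ∀ e1 nl1, SRE (.merge e1 nl1 0 .nil) e1
  | m3 : ∀ ol2 e2, SRE (.merge .nil 0 ol2 e2) e2
  | m4 : ∀ nl1 ol2 t l e2, 1 ≤ nl1 →
      SRE (.merge .nil nl1 ol2 (.econs t l e2)) (.merge .nil (nl1 - 1) (ol2 - 1) e2)
  | m5 : ∀ t n e1 nl1 ol2 s l e2, n < nl1 →
      SRE (.merge (.econs t n e1) nl1 ol2 (.econs s l e2))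
          (.merge (.econs t n e1) (nl1 - 1) (ol2 - 1) e2)
  | m6 : ∀ t n e1 ol2 s l e2,
      SRE (.merge (.econs t n e1) n ol2 (.econs s l e2))
          (.econs (.susp t ol2 l (.econs s l e2)) (l + (n - ol2))
                  (.merge e1 n ol2 (.econs s l e2)))
  | consT : ∀ {t t'} l e, SR t t' → SRE (.econs t l e) (.econs t' l e)
  | consE : ∀ t l {e e'}, SRE e e' → SRE (.econs t l e) (.econs t l e')
  | mergeL : ∀ {e1 e1'} nl1 ol2 e2, SRE e1 e1' →
      SRE (.merge e1 nl1 ol2 e2) (.merge e1' nl1 ol2 e2)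
  | mergeR : ∀ e1 nl1 ol2 {e2 e2'}, SRE e2 e2' →
      SRE (.merge e1 nl1 ol2 e2) (.merge e1 nl1 ol2 e2')
end

/-- Simple environments: nil-terminated lists of bindings (no merges). -/
inductive SimpleEnv : Env → Prop where
  | nil : SimpleEnv .nil
  | econs : ∀ t l {e}, SimpleEnv e → SimpleEnv (.econs t l e)

/-- Dropping the first `i` elements of a (simple) environment. -/
def Env.drop : Nat → Env → Env
  | 0, e => e
  | _ + 1, .nil => .nil
  | i + 1, .econs _ _ e => Env.drop i e
  | _ + 1, .merge _ _ _ _ => .nil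


/-! ### Auxiliary lemmas -/

/-- `SRE` preserves environment length. -/
theorem len_sre : ∀ {e e' : Env}, SRE e e' → e'.len = e.len
  | _, _, .m2 e1 nl1 => by simp [Env.len]
  | _, _, .m3 ol2 e2 => by simp [Env.len]
  | _, _, .m4 nl1 ol2 t l e2 h => by simp [Env.len]; omega
  | _, _, .m5 t n e1 nl1 ol2 s l e2 h => by simp [Env.len]; omega
  | _, _, .m6 t n e1 ol2 s l e2 => by simp [Env.len]; omega
  | _, _, .consT l e _ => rfl
  | _, _, .consE t l h => by simp [Env.len, len_sre h]
  | _, _, .mergeL nl1 ol2 e2 h => by simp [Env.len, len_sre h]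
  | _, _, .mergeR e1 nl1 ol2 h => by simp [Env.len, len_sre h]

/-- `SRE` does not increase the level of a well-formed environment. -/
theorem lev_sre : ∀ {e e' : Env}, SRE e e' → WfEnv e → e'.lev ≤ e.lev
  | _, _, .m2 e1 nl1, w => by
      cases w with | merge _ _ _ _ h _ => simpa [Env.lev] using h
  | _, _, .m3 ol2 e2, w => by simp [Env.lev]
  | _, _, .m4 nl1 ol2 t l e2 h, w => by
      cases w with | merge _ _ _ w2 _ _ =>
      cases w2 with | econs _ _ _ hl => simp [Env.lev] at hl ⊢; omega
  | _, _, .m5 t n e1 nl1 ol2 s l e2 h, w => by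
      cases w with | merge _ _ _ w2 _ _ =>
      cases w2 with | econs _ _ _ hl => simp [Env.lev] at hl ⊢; omega
  | _, _, .m6 t n e1 ol2 s l e2, w => by simp [Env.lev]
  | _, _, .consT l e _, w => le_refl _
  | _, _, .consE t l h, w => le_refl _
  | _, _, .mergeL nl1 ol2 e2 h, w => le_refl _
  | _, _, .mergeR e1 nl1 ol2 h, w => by
      cases w with | merge _ _ _ w2 _ _ =>
      have := lev_sre h w2
      simp [Env.lev]; omega

mutual
/-- Subject reduction for terms. -/
theorem wf_sr : ∀ {t t' : Tm}, SR t t' → WfTm t → WfTm t'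
  | _, _, .r1 c ol nl e, _ => .const c
  | _, _, .r2 i nl h, _ => .idx _ (le_trans h (Nat.le_add_right _ _))
  | _, _, .r3 ol nl t l e, w => by
      cases w with | susp _ _ _ we _ _ =>
      cases we with | econs _ wt _ _ =>
      exact .susp 0 (nl - l) wt .nil rfl (Nat.zero_le _)
  | _, _, .r4 i ol nl t l e h, w => by
      cases w with | susp _ _ _ we hlen hlev =>
      cases we with | econs _ _ we' hl =>
      refine .susp (ol - 1) nl (.idx _ (by omega)) we' ?_ ?_
      · simp [Env.len] at hlen; omega
      · simp [Env.lev] at hlev; omega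
  | _, _, .r5 t1 t2 ol nl e, w => by
      cases w with | susp _ _ wt we hlen hlev =>
      cases wt with | app w1 w2 =>
      exact .app (.susp ol nl w1 we hlen hlev) (.susp ol nl w2 we hlen hlev)
  | _, _, .r6 t ol nl e, w => by
      cases w with | susp _ _ wt we hlen hlev =>
      cases wt with | lam wt' =>
      exact .lam (.susp (ol + 1) (nl + 1) wt'
        (.econs (nl + 1) (.idx 1 le_rfl) we (by omega))
        (by simp [Env.len]; omega) (by simp [Env.lev]))
  | _, _, .m1 t ol1 nl1 e1 ol2 nl2 e2, w => by
      cases w with | susp _ _ wt we2 hlen2 hlev2 =>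
      cases wt with | susp _ _ wt' we1 hlen1 hlev1 =>
      exact .susp _ _ wt' (.merge nl1 ol2 we1 we2 hlev1 hlen2)
        (by simp [Env.len]; omega) (by simp [Env.lev]; omega)
  | _, _, .appL t2 h, w => by
      cases w with | app w1 w2 => exact .app (wf_sr h w1) w2
  | _, _, .appR t1 h, w => by
      cases w with | app w1 w2 => exact .app w1 (wf_sr h w2)
  | _, _, .lamC h, w => by
      cases w with | lam w1 => exact .lam (wf_sr h w1)
  | _, _, .suspT ol nl e h, w => by
      cases w with | susp _ _ wt we hlen hlev =>
      exact .susp _ _ (wf_sr h wt) we hlen hlev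
  | _, _, .suspE t ol nl h, w => by
      cases w with | susp _ _ wt we hlen hlev =>
      exact .susp _ _ wt (wf_sre h we) (by rw [len_sre h, hlen])
        (le_trans (lev_sre h we) hlev)

/-- Subject reduction for environments. -/
theorem wf_sre : ∀ {e e' : Env}, SRE e e' → WfEnv e → WfEnv e'
  | _, _, .m2 e1 nl1, w => by cases w with | merge _ _ w1 _ _ _ => exact w1
  | _, _, .m3 ol2 e2, w => by cases w with | merge _ _ _ w2 _ _ => exact w2
  | _, _, .m4 nl1 ol2 t l e2 h, w => by
      cases w with | merge _ _ w1 w2 hl hn =>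
      cases w2 with | econs _ _ w2' _ =>
      exact .merge _ _ .nil w2' (Nat.zero_le _) (by simp [Env.len] at hn; omega)
  | _, _, .m5 t n e1 nl1 ol2 s l e2 h, w => by
      cases w with | merge _ _ w1 w2 hl hn =>
      cases w2 with | econs _ _ w2' _ =>
      exact .merge _ _ w1 w2' (by simp [Env.lev] at hl ⊢; omega)
        (by simp [Env.len] at hn; omega)
  | _, _, .m6 t n e1 ol2 s l e2, w => by
      cases w with | merge _ _ w1 w2 hl hn =>
      cases w1 with | econs _ wt w1' hl1 =>
      exact .econs _ (.susp ol2 l wt w2 hn le_rfl)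
        (.merge _ _ w1' w2 hl1 hn) (by simp [Env.lev])
  | _, _, .consT l e h, w => by
      cases w with | econs _ wt we hl => exact .econs _ (wf_sr h wt) we hl
  | _, _, .consE t l h, w => by
      cases w with | econs _ wt we hl =>
      exact .econs _ wt (wf_sre h we) (le_trans (lev_sre h we) hl)
  | _, _, .mergeL nl1 ol2 e2 h, w => by
      cases w with | merge _ _ w1 w2 hl hn =>
      exact .merge _ _ (wf_sre h w1) w2 (le_trans (lev_sre h w1) hl) hn
  | _, _, .mergeR e1 nl1 ol2 h, w => by
      cases w with | merge _ _ w1 w2 hl hn =>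
      exact .merge _ _ w1 (wf_sre h w2) hl (by rw [len_sre h, hn])
end


/-- `nil` does not step. -/
theorem sre_nil {e' : Env} (h : SRE .nil e') : False := by cases h

/-- Simplicity is preserved by `SRE`. -/
theorem simple_sre : ∀ {e e' : Env}, SimpleEnv e → SRE e e' → SimpleEnv e'
  | _, _, .nil, h => absurd h sre_nil
  | _, _, .econs t l hs, h => by
      cases h with
      | consT _ _ _ => exact .econs _ _ hs
      | consE _ _ h' => exact .econs _ _ (simple_sre hs h')

/-- Dropping preserves simplicity. -/
theorem simple_drop : ∀ (i : Nat) {e : Env}, SimpleEnv e → SimpleEnv (Env.drop i e)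
  | 0, _, hs => hs
  | _ + 1, _, .nil => .nil
  | i + 1, _, .econs t l hs => simple_drop i hs

/-- A step of the dropped suffix lifts to a step of the whole environment. -/
theorem drop_lift : ∀ (i : Nat) {e d' : Env}, SimpleEnv e → SRE (Env.drop i e) d' →
    ∃ e', SRE e e' ∧ Env.drop i e' = d'
  | 0, e, d', _, h => ⟨d', h, rfl⟩
  | _ + 1, _, d', .nil, h => absurd h sre_nil
  | i + 1, _, d', .econs t l hs, h => by
      obtain ⟨e', h1, h2⟩ := drop_lift i hs h
      exact ⟨.econs t l e', .consE t l h1, h2⟩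

/-- Reflexive-transitive closure of `mergeL`. -/
theorem mergeL_star {e1 e1' : Env} (nl1 ol2 : Nat) (e2 : Env)
    (h : Relation.ReflTransGen SRE e1 e1') :
    Relation.ReflTransGen SRE (.merge e1 nl1 ol2 e2) (.merge e1' nl1 ol2 e2) := by
  induction h with
  | refl => exact .refl
  | tail _ h ih => exact ih.tail (.mergeL _ _ _ h)

/-- Along a many-step reduction from a well-formed environment, the result is
well-formed and the level does not increase. -/
theorem rtg_lev {e e' : Env} (h : Relation.ReflTransGen SRE e e') (w : WfEnv e) :
    WfEnv e' ∧ e'.lev ≤ e.lev := by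
  induction h with
  | refl => exact ⟨w, le_rfl⟩
  | tail _ h ih =>
      exact ⟨wf_sre h ih.1, le_trans (lev_sre h ih.1) ih.2⟩

/-- Peeling the whole suffix off a merge with a simple first environment. -/
theorem peel_all : ∀ {e2 : Env} (C : Env) (nl1 ol2 : Nat), SimpleEnv C → SimpleEnv e2 →
    e2.len = ol2 → C.lev + ol2 ≤ nl1 →
    Relation.ReflTransGen SRE (.merge C nl1 ol2 e2) C
  | _, C, nl1, ol2, hC, .nil, hlen, hle => by
      simp [Env.len] at hlen; subst hlen; exact .single (.m2 C nl1)
  | _, C, nl1, ol2, hC, .econs s l hs, hlen, hle => by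
      simp [Env.len] at hlen
      cases hC with
      | nil =>
          refine Relation.ReflTransGen.head (.m4 nl1 ol2 s l _ (by simp [Env.lev] at hle; omega)) ?_
          exact peel_all .nil (nl1 - 1) (ol2 - 1) .nil hs (by omega) (by simp [Env.lev] at hle ⊢; omega)
      | @econs t n C' hC' =>
          refine Relation.ReflTransGen.head (.m5 t n C' nl1 ol2 s l _ (by simp [Env.lev] at hle; omega)) ?_
          exact peel_all _ (nl1 - 1) (ol2 - 1) (.econs t n hC') hs (by omega) (by simp [Env.lev] at hle ⊢; omega)

/-- Part (1) of the pruning statement. -/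
theorem part1 {e1 e2 : Env} {nl1 ol2 : Nat}
    (w : WfEnv (.merge e1 nl1 ol2 e2)) (hs2 : SimpleEnv e2)
    (hle : ol2 ≤ nl1 - Env.lev e1) (C : Env) (hC : SimpleEnv C)
    (h : Relation.ReflTransGen SRE e1 C) :
    Relation.ReflTransGen SRE (.merge e1 nl1 ol2 e2) C := by
  cases w with | merge _ _ w1 w2 hl hn =>
  obtain ⟨wC, hlev⟩ := rtg_lev h w1
  exact .trans (mergeL_star nl1 ol2 e2 h) (peel_all C nl1 ol2 hC hs2 hn (by omega))


/-- Peeling `i` elements with `(m4)` when the left environment is `nil`. -/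
theorem m4_steps : ∀ (i : Nat) {e2 : Env} (nl1 ol2 : Nat), SimpleEnv e2 →
    i ≤ e2.len → i ≤ nl1 →
    Relation.ReflTransGen SRE (.merge .nil nl1 ol2 e2)
      (.merge .nil (nl1 - i) (ol2 - i) (Env.drop i e2))
  | 0, e2, nl1, ol2, _, _, _ => .refl
  | i + 1, _, nl1, ol2, .nil, hlen, hnl => by simp [Env.len] at hlen
  | i + 1, _, nl1, ol2, .econs s l hs, hlen, hnl => by
      refine Relation.ReflTransGen.head (.m4 nl1 ol2 s l _ (by omega)) ?_
      have h := m4_steps i (nl1 - 1) (ol2 - 1) hs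
        (by simp [Env.len] at hlen; omega) (by omega)
      have eqa : nl1 - 1 - i = nl1 - (i + 1) := by omega
      have eqb : ol2 - 1 - i = ol2 - (i + 1) := by omega
      rw [eqa, eqb] at h
      exact h

/-- Peeling `i` elements with `(m5)` when the left environment is a cons. -/
theorem m5_steps : ∀ (i : Nat) {e2 : Env} (t : Tm) (n : Nat) (e1h : Env)
    (nl1 ol2 : Nat), SimpleEnv e2 → i ≤ e2.len → n + i ≤ nl1 →
    Relation.ReflTransGen SRE (.merge (.econs t n e1h) nl1 ol2 e2)
      (.merge (.econs t n e1h) (nl1 - i) (ol2 - i) (Env.drop i e2))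
  | 0, e2, t, n, e1h, nl1, ol2, _, _, _ => .refl
  | i + 1, _, t, n, e1h, nl1, ol2, .nil, hlen, hnl => by simp [Env.len] at hlen
  | i + 1, _, t, n, e1h, nl1, ol2, .econs s l hs, hlen, hnl => by
      refine Relation.ReflTransGen.head (.m5 t n e1h nl1 ol2 s l _ (by omega)) ?_
      have h := m5_steps i t n e1h (nl1 - 1) (ol2 - 1) hs
        (by simp [Env.len] at hlen; omega) (by omega)
      have eqa : nl1 - 1 - i = nl1 - (i + 1) := by omega
      have eqb : ol2 - 1 - i = ol2 - (i + 1) := by omega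
      rw [eqa, eqb] at h
      exact h

/-- Part (2) of the pruning statement, as an induction over the given
reduction sequence. -/
theorem part2_aux {C : Env} (hC : SimpleEnv C) :
    ∀ {B : Env}, Relation.ReflTransGen SRE B C →
    ∀ e1 e2 nl1 ol2 i, B = Env.merge e1 (nl1 - i) (ol2 - i) (Env.drop i e2) →
      WfEnv (.merge e1 nl1 ol2 e2) → SimpleEnv e2 → 0 < i →
      i ≤ nl1 - e1.lev → i ≤ ol2 →
      Relation.ReflTransGen SRE (.merge e1 nl1 ol2 e2) C := by
  intro B h
  induction h using Relation.ReflTransGen.head_induction_on with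
  | refl =>
      intro e1 e2 nl1 ol2 i hB w hs hi hle1 hle2
      subst hB
      cases hC
  | head step rest ih =>
      intro e1 e2 nl1 ol2 i hB w hs hi hle1 hle2
      subst hB
      have wmerge := w
      cases w with | merge _ _ w1 w2 hl hn =>
      have hBC : Relation.ReflTransGen SRE
          (.merge e1 (nl1 - i) (ol2 - i) (Env.drop i e2)) C := rest.head step
      cases e1 with
      | nil =>
          exact .trans (m4_steps i nl1 ol2 hs (by omega)
            (by simpa [Env.lev] using hle1)) hBC
      | econs t n e1h =>
          simp [Env.lev] at hl hle1
          exact .trans (m5_steps i t n e1h nl1 ol2 hs (by omega) (by omega)) hBC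
      | merge f1 m o f2 =>
          generalize hq1 : nl1 - i = nq at step
          generalize hq2 : ol2 - i = oq at step
          generalize hq3 : Env.drop i e2 = dq at step
          cases step with
          | m2 =>
              exact part1 wmerge hs (by omega) C hC rest
          | mergeL _ _ _ h' =>
              refine Relation.ReflTransGen.head (.mergeL nl1 ol2 e2 h')
                (ih _ _ nl1 ol2 i (by rw [hq1, hq2, hq3]) ?_ hs hi ?_ hle2)
              · exact .merge nl1 ol2 (wf_sre h' w1) w2 (le_trans (lev_sre h' w1) hl) hn
              · have := lev_sre h' w1; omega
          | mergeR _ _ _ h' =>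
              rw [← hq3] at h'
              obtain ⟨e2', h1', h2'⟩ := drop_lift i hs h'
              refine Relation.ReflTransGen.head (.mergeR _ nl1 ol2 h1')
                (ih _ _ nl1 ol2 i (by rw [hq1, hq2, h2']) ?_ (simple_sre hs h1') hi hle1 hle2)
              exact .merge nl1 ol2 w1 (wf_sre h1' w2) hl (by rw [len_sre h1', hn])

/-- pruning of irrelevant environment suffixes in composition.
Let A = {e1, nl1, ol2, e2} with e2 simple.  (1) If ol2 ≤ nl1 − lev(e1) then A
reduces to any simple environment that e1 reduces to.  (2) For positive
i ≤ nl1 − lev(e1) with i ≤ ol2, A reduces to any simple environment that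
{e1, nl1 − i, ol2 − i, e2{i}} reduces to. -/
theorem merge_pruning :
    ∀ (e1 e2 : Env) (nl1 ol2 : Nat),
      WfEnv (.merge e1 nl1 ol2 e2) → SimpleEnv e2 →
      ((ol2 ≤ nl1 - Env.lev e1 →
          ∀ C : Env, SimpleEnv C → Relation.ReflTransGen SRE e1 C →
            Relation.ReflTransGen SRE (.merge e1 nl1 ol2 e2) C) ∧
       (∀ i : Nat, 0 < i → i ≤ nl1 - Env.lev e1 → i ≤ ol2 →
          ∀ C : Env, SimpleEnv C →
            Relation.ReflTransGen SRE
              (.merge e1 (nl1 - i) (ol2 - i) (Env.drop i e2)) C →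
            Relation.ReflTransGen SRE (.merge e1 nl1 ol2 e2) C)) := by
  intro e1 e2 nl1 ol2 w hs
  refine ⟨fun hle C hC h => part1 w hs hle C hC h, ?_⟩
  intro i hi h1 h2 C hC hB
  exact part2_aux hC hB e1 e2 nl1 ol2 i rfl w hs hi h1 h2
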